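/- Fix μ ∈ (0,1], δ ∈ (0,1/2), n ≥ 1, and let L = 8·log(n/δ)/μ. Define B(ℓ, δ', μ) = (1/2)·(1 − μ/2)^{ℓ − L₀(δ',μ)} with L₀(δ',μ) = max{⌈log(1/(2δ'))/log(1+μ/2)⌉, 0}. Then for any δ_ij ∈ (0, 1/2) with δ_ij ≥ δ, 2·B(L/2, δ_ij, μ) ≤ (δ/n)²·(1/δ_ij)². -/
import Mathlib


/-- Fix μ ∈ (0,1], δ ∈ (0,1/2), n ≥ 1, and let
L = 8·log(n/δ)/μ. With B(ℓ,δ',μ) = (1/2)·(1 − μ/2)^(ℓ − L₀(δ',μ)) and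
L₀(δ',μ) = max{⌈log(1/(2δ'))/log(1+μ/2)⌉, 0}, then for any δ_ij ∈ (0,1/2) with
δ_ij ≥ δ, 2·B(L/2, δ_ij, μ) ≤ (δ/n)²·(1/δ_ij)². -/
theorem stmt11 (μ δ δij : ℝ) (n : ℕ) (hμ0 : 0 < μ) (hμ1 : μ ≤ 1)
    (hδ0 : 0 < δ) (hδ : δ ≤ δij) (hδij : δij < 1/2) (hn : 1 ≤ n) :
    2 * ((1/2) * (1 - μ/2) ^
      (8 * Real.log (n / δ) / μ / 2 -
        ((max ⌈Real.log (1 / (2 * δij)) / Real.log (1 + μ / 2)⌉ 0 : ℤ) : ℝ))) ≤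
      (δ / n) ^ 2 * (1 / δij) ^ 2 := by
  have hδij0 : 0 < δij := lt_of_lt_of_le hδ0 hδ
  have hn' : (1:ℝ) ≤ (n:ℝ) := by exact_mod_cast hn
  have hnpos : (0:ℝ) < (n:ℝ) := by linarith
  have ha : (0:ℝ) < 1 - μ/2 := by linarith
  have hlog2pos : (0:ℝ) < Real.log 2 := Real.log_pos (by norm_num)
  have hlog2lb : (0.693:ℝ) ≤ Real.log 2 := by
    have := Real.log_two_gt_d9; linarith
  -- −log(1−μ/2) ≥ μ/2
  have h1 : Real.log (1 - μ/2) ≤ -(μ/2) := by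
    have := Real.log_le_sub_one_of_pos ha; linarith
  -- log(1+μ/2) ≥ μ/3
  have hb : (0:ℝ) < 1 + μ/2 := by linarith
  have h2 : μ/3 ≤ Real.log (1 + μ/2) := by
    have h := Real.log_le_sub_one_of_pos (show (0:ℝ) < 1/(1+μ/2) by positivity)
    rw [Real.log_div one_ne_zero (ne_of_gt hb), Real.log_one] at h
    have hineq : 1/(1+μ/2) ≤ 1 - μ/3 := by
      rw [div_le_iff₀ hb]
      nlinarith
    linarith
  set A := Real.log ((n:ℝ)/δ) with hA
  set D := -Real.log δij with hD
  have hlogn : 0 ≤ Real.log (n:ℝ) := Real.log_nonneg hn'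
  have hAval : A = Real.log (n:ℝ) - Real.log δ :=
    Real.log_div (ne_of_gt hnpos) (ne_of_gt hδ0)
  clear_value A
  have hDlb : Real.log 2 ≤ D := by
    have h3 : Real.log δij < Real.log (1/2) := Real.log_lt_log hδij0 hδij
    rw [Real.log_div one_ne_zero two_ne_zero, Real.log_one] at h3
    rw [hD]; linarith
  have hD0 : 0 < D := lt_of_lt_of_le hlog2pos hDlb
  have hAD : D ≤ A := by
    have h4 : Real.log δ ≤ Real.log δij := Real.log_le_log hδ0 hδ
    rw [hAval, hD]; linarith
  -- bound the ceiling term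
  set c : ℤ := max ⌈Real.log (1 / (2 * δij)) / Real.log (1 + μ / 2)⌉ 0 with hc
  have hy : Real.log (1 / (2 * δij)) = D - Real.log 2 := by
    rw [Real.log_div one_ne_zero (by positivity), Real.log_one,
      Real.log_mul two_ne_zero (ne_of_gt hδij0), hD]
    ring
  have hcle : (c:ℝ) ≤ 3 / μ * D := by
    have hM0 : (0:ℝ) ≤ 3 / μ * D := by positivity
    have hcast : (c:ℝ) = max ((⌈Real.log (1 / (2 * δij)) / Real.log (1 + μ / 2)⌉ : ℤ) : ℝ) 0 := by
      rw [hc]; push_cast; rfl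
    rw [hcast, max_le_iff]
    refine ⟨?_, hM0⟩
    rw [hy]
    have hceil : (⌈(D - Real.log 2) / Real.log (1 + μ / 2)⌉ : ℝ) <
        (D - Real.log 2) / Real.log (1 + μ / 2) + 1 := Int.ceil_lt_add_one _
    have hnum : (0:ℝ) ≤ D - Real.log 2 := by linarith
    have hdiv : (D - Real.log 2) / Real.log (1 + μ / 2) ≤
        (D - Real.log 2) / (μ/3) := by
      gcongr
    have he1 : (D - Real.log 2) / (μ/3) = 3 / μ * D - 3 * Real.log 2 / μ := by
      field_simp
    have he2 : (1:ℝ) ≤ 3 * Real.log 2 / μ := by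
      rw [le_div_iff₀ hμ0]
      linarith
    linarith
  clear_value c
  -- exponent is nonnegative, and exponent·μ ≥ 4A − 3D
  set e : ℝ := 8 * A / μ / 2 - (c:ℝ) with he
  clear_value e
  have hEμ : 4 * A - 3 * D ≤ e * μ := by
    have : (c:ℝ) * μ ≤ 3 * D := by
      have h6 := mul_le_mul_of_nonneg_right hcle (le_of_lt hμ0)
      have h7 : 3 / μ * D * μ = 3 * D := by field_simp
      linarith
    have h8 : 8 * A / μ / 2 * μ = 4 * A := by field_simp; ring
    calc 4 * A - 3 * D ≤ 4 * A - (c:ℝ) * μ := by linarith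
    _ = e * μ := by rw [he, sub_mul, h8]
  have hE0 : 0 ≤ e := by
    have h43 : 0 ≤ 4 * A - 3 * D := by linarith
    nlinarith
  -- compare via exp
  have hexp : (1 - μ/2) ^ e = Real.exp (Real.log (1 - μ/2) * e) :=
    Real.rpow_def_of_pos ha e
  have hRHS : (δ / (n:ℝ)) ^ 2 * (1 / δij) ^ 2 = Real.exp (2 * D - 2 * A) := by
    have h5 : Real.log ((δ / (n:ℝ)) ^ 2 * (1 / δij) ^ 2) = 2 * D - 2 * A := by
      rw [Real.log_mul (by positivity) (by positivity), Real.log_pow, Real.log_pow,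
        Real.log_div (ne_of_gt hδ0) (ne_of_gt hnpos),
        Real.log_div one_ne_zero (ne_of_gt hδij0), Real.log_one, hAval, hD]
      push_cast
      ring
    rw [← h5, Real.exp_log (by positivity)]
  have hlemain : Real.log (1 - μ/2) * e ≤ 2 * D - 2 * A := by
    have h8 := mul_le_mul_of_nonneg_right h1 hE0
    have h9 : -(μ/2) * e ≤ 2 * D - 2 * A := by nlinarith [hD0]
    linarith
  calc 2 * ((1/2) * (1 - μ/2) ^ e) = (1 - μ/2) ^ e := by ring
    _ = Real.exp (Real.log (1 - μ/2) * e) := hexp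
    _ ≤ Real.exp (2 * D - 2 * A) := Real.exp_le_exp.mpr hlemain
    _ = (δ / (n:ℝ)) ^ 2 * (1 / δij) ^ 2 := hRHS.symm
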